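/- If additionally X and Y are independent, then L_g(s) = L_Y(s)·(1 - L_X(s))/(s·E[X]) for all s > 0. -/

import Mathlib

open MeasureTheory Set ProbabilityTheory
open scoped ENNReal

/-!
By Tonelli, `∫₀^∞ e^{-st} P(Y < t < X + Y) dt = E[∫_Y^{X+Y} e^{-st} dt]`, which is
`E[e^{-sY} - e^{-s(X+Y)}] / s`, and independence factors `E[e^{-s(X+Y)}] = L_X(s) L_Y(s)`.
-/

lemma integral_Ioo_exp_neg_mul {s : ℝ} (hs : s ≠ 0) {a b : ℝ} (hab : a ≤ b) :
    ∫ t in Ioo a b, Real.exp (-s * t) = (Real.exp (-s * a) - Real.exp (-s * b)) / s := by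
  rw [← integral_Ioc_eq_integral_Ioo, ← intervalIntegral.integral_of_le hab,
    intervalIntegral.integral_comp_mul_left Real.exp (neg_ne_zero.2 hs), integral_exp,
    smul_eq_mul, inv_neg, neg_mul, ← mul_neg, neg_sub, inv_mul_eq_div]

lemma lintegral_Ioo_exp_neg_mul {s : ℝ} (hs : s ≠ 0) {a b : ℝ} (hab : a ≤ b) :
    ∫⁻ t in Ioo a b, ENNReal.ofReal (Real.exp (-s * t)) =
      ENNReal.ofReal ((Real.exp (-s * a) - Real.exp (-s * b)) / s) := by
  rw [← integral_Ioo_exp_neg_mul hs hab, ofReal_integral_eq_lintegral_ofReal]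
  · exact (by fun_prop : Continuous fun t => Real.exp (-s * t)).integrableOn_Icc.mono_set
      Ioo_subset_Icc_self
  · exact ae_of_all _ fun t => (Real.exp_pos _).le

lemma integrable_exp_neg_mul_of_nonneg {Ω : Type*} [MeasurableSpace Ω] (μ : Measure Ω)
    [IsFiniteMeasure μ] {C : Ω → ℝ} (hC : Measurable C) (hC0 : ∀ ω, 0 ≤ C ω) {s : ℝ}
    (hs : 0 ≤ s) : Integrable (fun ω => Real.exp (-s * C ω)) μ := by
  refine .of_bound (by fun_prop) 1 (ae_of_all _ fun ω => ?_)
  rw [Real.norm_of_nonneg (Real.exp_pos _).le, Real.exp_le_one_iff]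
  nlinarith [hC0 ω]

section Between

variable {Ω : Type*} [MeasurableSpace Ω] {A B : Ω → ℝ}

lemma measurableSet_between (hA : Measurable A) (hB : Measurable B) :
    MeasurableSet {p : ℝ × Ω | A p.2 < p.1 ∧ p.1 < B p.2} :=
  (measurableSet_lt (hA.comp measurable_snd) measurable_fst).inter
    (measurableSet_lt measurable_fst (hB.comp measurable_snd))

lemma measurable_measure_between (μ : Measure Ω) [SFinite μ] (hA : Measurable A)
    (hB : Measurable B) : Measurable fun t => μ {ω | A ω < t ∧ t < B ω} :=
  measurable_measure_prodMk_left (measurableSet_between hA hB)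

lemma lintegral_mul_measure_between (μ : Measure Ω) [SFinite μ] (ν : Measure ℝ) [SFinite ν]
    (hA : Measurable A) (hB : Measurable B) {f : ℝ → ℝ≥0∞} (hf : Measurable f) :
    ∫⁻ t, f t * μ {ω | A ω < t ∧ t < B ω} ∂ν =
      ∫⁻ ω, ∫⁻ t in Ioo (A ω) (B ω), f t ∂ν ∂μ := by
  set S : Set (ℝ × Ω) := {p | A p.2 < p.1 ∧ p.1 < B p.2}
  have hS : MeasurableSet S := measurableSet_between hA hB
  calc ∫⁻ t, f t * μ {ω | A ω < t ∧ t < B ω} ∂ν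
      = ∫⁻ t, ∫⁻ ω, S.indicator (fun p => f p.1) (t, ω) ∂μ ∂ν :=
        lintegral_congr fun t => (lintegral_indicator_const (measurable_prodMk_left hS) (f t)).symm
    _ = ∫⁻ ω, ∫⁻ t, S.indicator (fun p => f p.1) (t, ω) ∂ν ∂μ :=
        lintegral_lintegral_swap ((hf.comp measurable_fst).indicator hS).aemeasurable
    _ = ∫⁻ ω, ∫⁻ t in Ioo (A ω) (B ω), f t ∂ν ∂μ := by
        refine lintegral_congr fun ω => ?_
        rw [← lintegral_indicator measurableSet_Ioo]
        rfl

lemma integral_exp_neg_mul_measure_between (μ : Measure Ω) [IsFiniteMeasure μ]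
    (hA : Measurable A) (hB : Measurable B) (hA0 : ∀ ω, 0 ≤ A ω) (hAB : ∀ ω, A ω ≤ B ω)
    {s : ℝ} (hs : 0 < s) :
    ∫ t in Ioi 0, Real.exp (-s * t) * (μ {ω | A ω < t ∧ t < B ω}).toReal =
      ((∫ ω, Real.exp (-s * A ω) ∂μ) - ∫ ω, Real.exp (-s * B ω) ∂μ) / s := by
  have hB0 : ∀ ω, 0 ≤ B ω := fun ω => (hA0 ω).trans (hAB ω)
  have hexp_anti : ∀ ω, Real.exp (-s * B ω) ≤ Real.exp (-s * A ω) := fun ω =>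
    Real.exp_le_exp.2 (by nlinarith [hAB ω])
  rw [← integral_sub (integrable_exp_neg_mul_of_nonneg μ hA hA0 hs.le)
      (integrable_exp_neg_mul_of_nonneg μ hB hB0 hs.le), ← integral_div,
    integral_eq_lintegral_of_nonneg_ae, integral_eq_lintegral_of_nonneg_ae]
  · congr 1
    calc ∫⁻ t in Ioi 0,
          ENNReal.ofReal (Real.exp (-s * t) * (μ {ω | A ω < t ∧ t < B ω}).toReal)
        = ∫⁻ t in Ioi 0,
            ENNReal.ofReal (Real.exp (-s * t)) * μ {ω | A ω < t ∧ t < B ω} := by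
          refine lintegral_congr fun t => ?_
          rw [ENNReal.ofReal_mul (Real.exp_pos _).le, ENNReal.ofReal_toReal (measure_ne_top _ _)]
      _ = ∫⁻ ω, ∫⁻ t in Ioo (A ω) (B ω), ENNReal.ofReal (Real.exp (-s * t))
            ∂volume.restrict (Ioi 0) ∂μ :=
          lintegral_mul_measure_between μ _ hA hB (by fun_prop)
      _ = _ := by
          refine lintegral_congr fun ω => ?_
          have hIoo : Ioo (A ω) (B ω) ⊆ Ioi 0 :=
            Ioo_subset_Ioi_self.trans (Ioi_subset_Ioi (hA0 ω))
          rw [Measure.restrict_restrict_of_subset hIoo,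
            lintegral_Ioo_exp_neg_mul hs.ne' (hAB ω)]
  · exact ae_of_all _ fun ω => div_nonneg (sub_nonneg.2 (hexp_anti ω)) hs.le
  · fun_prop
  · exact ae_of_all _ fun t => mul_nonneg (Real.exp_pos _).le ENNReal.toReal_nonneg
  · exact ((by fun_prop : Measurable fun t : ℝ => Real.exp (-s * t)).mul
      (measurable_measure_between μ hA hB).ennreal_toReal).aestronglyMeasurable

end Between

theorem generation_time_laplace_indep_general
    {Ω : Type*} [MeasurableSpace Ω] (μ : Measure Ω) [IsProbabilityMeasure μ]
    (X Y : Ω → ℝ) (hX : Measurable X) (hY : Measurable Y)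
    (hXpos : ∀ ω, 0 ≤ X ω) (hYpos : ∀ ω, 0 ≤ Y ω)
    (hindep : IndepFun X Y μ)
    (g : ℝ → ℝ)
    (hg : ∀ t, g t = (μ {ω | Y ω < t ∧ t < X ω + Y ω}).toReal / ∫ ω, X ω ∂μ) :
    ∀ s : ℝ, 0 < s →
      ∫ t in Ioi (0:ℝ), Real.exp (-s * t) * g t =
        (∫ ω, Real.exp (-s * Y ω) ∂μ) * (1 - ∫ ω, Real.exp (-s * X ω) ∂μ) /
          (s * ∫ ω, X ω ∂μ) := by
  intro s hs
  have hwindow := integral_exp_neg_mul_measure_between μ hY (B := fun ω => X ω + Y ω)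
    (hX.add hY) hYpos (fun ω => le_add_of_nonneg_left (hXpos ω)) hs
  have hmgf : ∫ ω, Real.exp (-s * (X ω + Y ω)) ∂μ =
      (∫ ω, Real.exp (-s * X ω) ∂μ) * ∫ ω, Real.exp (-s * Y ω) ∂μ :=
    hindep.mgf_add' hX.aestronglyMeasurable hY.aestronglyMeasurable
  calc ∫ t in Ioi (0:ℝ), Real.exp (-s * t) * g t
      = (∫ t in Ioi 0, Real.exp (-s * t) * (μ {ω | Y ω < t ∧ t < X ω + Y ω}).toReal) /
          ∫ ω, X ω ∂μ := by
        simp_rw [hg, mul_div_assoc']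
        exact integral_div _ _
    _ = _ := by
        rw [hwindow, hmgf]
        ring

theorem generation_time_laplace_indep
    {Ω : Type*} [MeasurableSpace Ω] (μ : Measure Ω) [IsProbabilityMeasure μ]
    (X Y : Ω → ℝ) (hX : Measurable X) (hY : Measurable Y)
    (hXpos : ∀ ω, 0 ≤ X ω) (hYpos : ∀ ω, 0 ≤ Y ω)
    (hindep : IndepFun X Y μ)
    (hXint : Integrable X μ) (hEX : 0 < ∫ ω, X ω ∂μ)
    (g : ℝ → ℝ)
    (hg : ∀ t, g t = (μ {ω | Y ω < t ∧ t < X ω + Y ω}).toReal / ∫ ω, X ω ∂μ) :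
    ∀ s : ℝ, 0 < s →
      ∫ t in Ioi (0:ℝ), Real.exp (-s * t) * g t =
        (∫ ω, Real.exp (-s * Y ω) ∂μ) * (1 - ∫ ω, Real.exp (-s * X ω) ∂μ) /
          (s * ∫ ω, X ω ∂μ) :=
  generation_time_laplace_indep_general μ X Y hX hY hXpos hYpos hindep g hg
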